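/- Let X be a Banach function space in L⁰(Ω, Σ, ℙ) (in particular possessing a weak unit u > 0). Then any family {x*_γ}_{γ∈Γ} of positive order continuous functionals on X admits a countable subfamily {x*_{γ_n}} such that for every x ∈ X₊: if x*_{γ_n}(x) = 0 for all n, then x*_γ(x) = 0 for all γ ∈ Γ. -/

import Mathlib

open MeasureTheory Filter

universe u v

variable {Ω : Type u}

/-- Order convergence of a net in a lattice-ordered group. -/
def OrderConvNet {E : Type v} [Lattice E] [AddCommGroup E] {ι : Type*} [Preorder ι]
    (y : ι → E) (x : E) : Prop :=
  ∃ z : ι → E, Antitone z ∧ IsGLB (Set.range z) 0 ∧ ∀ᶠ a in atTop, |y a - x| ≤ z a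

/-- A functional is order continuous if it carries nets order-converging to `0` to nets
converging to `0` in `ℝ`. -/
def OrderContinuousFun {E : Type v} [Lattice E] [AddCommGroup E] (φ : E → ℝ) : Prop :=
  ∀ (ι : Type v) (_ : Preorder ι) (_ : IsDirected ι (· ≤ ·)) (_ : Nonempty ι)
    (y : ι → E), OrderConvNet y 0 → Tendsto (fun a => φ (y a)) atTop (nhds 0)

/-- The Banach lattice `E` is a Banach function space in `L⁰(μ)` via `T`, i.e. `T` is a
linear order embedding of `E` onto an ideal (solid subspace) of `L⁰`. -/
structure IsBFSvia {m0 : MeasurableSpace Ω} (μ : Measure Ω) (E : Type v)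
    [NormedAddCommGroup E] [Lattice E] [HasSolidNorm E] [IsOrderedAddMonoid E] [NormedSpace ℝ E] [CompleteSpace E]
    (T : E →ₗ[ℝ] (Ω →ₘ[μ] ℝ)) : Prop where
  ord : ∀ x y : E, x ≤ y ↔ T x ≤ T y
  solid : ∀ (h : Ω →ₘ[μ] ℝ) (x : E), |h| ≤ |T x| → ∃ e : E, T e = h

/-!
A positive order continuous functional `φ` induces the finite measure `ν_φ A = φ (1_A · u)`,
absolutely continuous with respect to `μ`, and for `x ≥ 0` we have `φ x = 0` iff
`ν_φ {x > 0} = 0`: if `φ x = 0` then `φ (1_{u ≤ n x} · u) ≤ n φ x = 0` for every `n`; conversely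
`x ⊓ k u ≤ k (1_{x > 0} · u)`, and `x ⊓ k u` increases to `x` in order because `u` is a weak unit.
The theorem thus reduces to the Halmos–Savage lemma: a family of measures absolutely continuous
with respect to a finite measure `μ` is dominated by a countable subfamily. For that, choose
countably many `γ` for which the union of the sets `{dν_γ/dμ > 0}` has maximal `μ`-measure.
-/

open scoped Topology

namespace MeasureTheory

variable {Γ : Type*} {m0 : MeasurableSpace Ω}

theorem exists_seq_measure_iUnion_eq_iSup [Nonempty Γ] (μ : Measure Ω) (C : Γ → Set Ω) :
    ∃ t : ℕ → Γ, μ (⋃ n, C (t n)) = ⨆ s : ℕ → Γ, μ (⋃ n, C (s n)) := by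
  obtain ⟨a, -, ha, ha_mem⟩ := exists_seq_tendsto_sSup (Set.range_nonempty
    fun s : ℕ → Γ => μ (⋃ n, C (s n))) (OrderTop.bddAbove _)
  choose s hs using ha_mem
  refine ⟨fun m => s m.unpair.1 m.unpair.2, le_antisymm (le_iSup_of_le _ le_rfl) ?_⟩
  refine le_of_tendsto' ha fun k => (hs k).symm.trans_le (measure_mono ?_)
  exact Set.iUnion_subset fun n => Set.subset_iUnion_of_subset (Nat.pair k n) (by simp)

theorem exists_seq_ae_le_iUnion [Nonempty Γ] (μ : Measure Ω) [IsFiniteMeasure μ]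
    (C : Γ → Set Ω) (hC : ∀ γ, MeasurableSet (C γ)) :
    ∃ t : ℕ → Γ, ∀ γ, C γ ≤ᵐ[μ] ⋃ n, C (t n) := by
  obtain ⟨t, ht⟩ := exists_seq_measure_iUnion_eq_iSup μ C
  refine ⟨t, fun γ => ae_le_set.2 ?_⟩
  set S := ⋃ n, C (t n)
  have hS : MeasurableSet S := MeasurableSet.iUnion fun n => hC (t n)
  have hγS : C γ ∪ S = ⋃ n, C (Nat.casesOn n γ t : Γ) :=
    Set.union_iUnion_nat_succ fun n => C (Nat.casesOn n γ t : Γ)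
  have hle : μ S + μ (C γ \ S) ≤ μ S + 0 := by
    rw [← measure_union' Set.disjoint_sdiff_right hS, Set.union_sdiff_self, Set.union_comm,
      hγS, add_zero, ht]
    exact le_iSup (fun s : ℕ → Γ => μ (⋃ n, C (s n))) _
  exact nonpos_iff_eq_zero.1 ((ENNReal.add_le_add_iff_left (measure_ne_top μ S)).1 hle)

theorem Measure.measure_eq_zero_iff_inter_rnDeriv_pos {μ ν : Measure Ω} [SFinite μ]
    [ν.HaveLebesgueDecomposition μ] (hνμ : ν ≪ μ) {A : Set Ω} (hA : MeasurableSet A) :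
    ν A = 0 ↔ μ (A ∩ {ω | 0 < ν.rnDeriv μ ω}) = 0 := by
  rw [← Measure.setLIntegral_rnDeriv hνμ, setLIntegral_eq_zero_iff hA
    (Measure.measurable_rnDeriv _ _), ae_iff]
  simp only [Classical.not_imp, ← pos_iff_ne_zero]
  rfl

theorem Measure.exists_seq_absolutelyContinuous_sum [Nonempty Γ] (μ : Measure Ω)
    [IsFiniteMeasure μ] (ν : Γ → Measure Ω) [∀ γ, SigmaFinite (ν γ)] (hν : ∀ γ, ν γ ≪ μ) :
    ∃ t : ℕ → Γ, ∀ γ, ν γ ≪ Measure.sum fun n => ν (t n) := by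
  obtain ⟨t, ht⟩ := exists_seq_ae_le_iUnion μ (fun γ => {ω | 0 < (ν γ).rnDeriv μ ω})
    fun γ => measurableSet_lt measurable_const (Measure.measurable_rnDeriv _ _)
  refine ⟨t, fun γ => Measure.AbsolutelyContinuous.mk fun A hA hA0 => ?_⟩
  have hnull : ∀ n, μ (A ∩ {ω | 0 < (ν (t n)).rnDeriv μ ω}) = 0 := fun n =>
    (Measure.measure_eq_zero_iff_inter_rnDeriv_pos (hν (t n)) hA).1
      ((Measure.sum_apply_eq_zero' hA).1 hA0 n)
  rw [Measure.measure_eq_zero_iff_inter_rnDeriv_pos (hν γ) hA]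
  refine measure_mono_null_ae ((EventuallyLE.refl _ A).inter (ht γ)) ?_
  rw [Set.inter_iUnion]
  exact measure_iUnion_null hnull

end MeasureTheory

theorem OrderContinuousFun.tendsto_of_antitone {E : Type v} [Lattice E] [AddCommGroup E]
    [IsOrderedAddMonoid E] {φ : E → ℝ} (hφ : OrderContinuousFun φ) {z : ℕ → E}
    (hz : Antitone z) (hz0 : ∀ n, 0 ≤ z n) (hglb : IsGLB (Set.range z) 0) :
    Tendsto (fun n => φ (z n)) atTop (𝓝 0) := by
  have hup : Tendsto (ULift.up : ℕ → ULift.{v} ℕ) atTop atTop :=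
    tendsto_atTop_atTop.2 fun b => ⟨b.down, fun _ ha => ha⟩
  refine (hφ (ULift.{v} ℕ) inferInstance inferInstance inferInstance (fun a => z a.down)
    ⟨fun a => z a.down, fun _ _ hab => hz hab, ?_, ?_⟩).comp hup
  · rw [← ULift.down_surjective.range_comp] at hglb
    exact hglb
  · exact Eventually.of_forall fun a => by rw [sub_zero, abs_of_nonneg (hz0 a.down)]

theorem LinearMap.monotone_of_nonneg {E : Type*} [AddCommGroup E] [PartialOrder E]
    [IsOrderedAddMonoid E] [Module ℝ E] (φ : E →ₗ[ℝ] ℝ) (hφ : ∀ x, 0 ≤ x → 0 ≤ φ x) :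
    Monotone φ := (PositiveLinearMap.mk₀ φ hφ).monotone'

theorem MeasurableSet.accumulate {m0 : MeasurableSpace Ω} {f : ℕ → Set Ω}
    (hf : ∀ i, MeasurableSet (f i)) (n : ℕ) : MeasurableSet (Set.accumulate f n) := by
  rw [Set.accumulate_def]
  exact .iUnion fun i => .iUnion fun _ => hf i

namespace IsBFSvia

variable {m0 : MeasurableSpace Ω} {μ : Measure Ω} {E : Type v} [NormedAddCommGroup E] [Lattice E]
  [HasSolidNorm E] [IsOrderedAddMonoid E] [NormedSpace ℝ E] [CompleteSpace E]
  {T : E →ₗ[ℝ] (Ω →ₘ[μ] ℝ)}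

theorem injective (hT : IsBFSvia μ E T) : Function.Injective T := fun a b hab =>
  le_antisymm ((hT.ord a b).2 hab.le) ((hT.ord b a).2 hab.ge)

theorem le_iff_ae (hT : IsBFSvia μ E T) {x y : E} : x ≤ y ↔ ⇑(T x) ≤ᵐ[μ] ⇑(T y) :=
  (hT.ord x y).trans AEEqFun.coeFn_le.symm

theorem nonneg_iff_ae (hT : IsBFSvia μ E T) {x : E} : 0 ≤ x ↔ ∀ᵐ ω ∂μ, 0 ≤ T x ω := by
  rw [hT.le_iff_ae, map_zero]
  refine eventually_congr ?_
  filter_upwards [AEEqFun.coeFn_zero (μ := μ) (β := ℝ)] with ω h0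
  rw [h0, Pi.zero_apply]

theorem eq_zero_iff_ae (hT : IsBFSvia μ E T) {x : E} : x = 0 ↔ ⇑(T x) =ᵐ[μ] 0 := by
  rw [← hT.injective.eq_iff, map_zero, AEEqFun.ext_iff]
  exact ⟨fun h => h.trans AEEqFun.coeFn_zero, fun h => h.trans AEEqFun.coeFn_zero.symm⟩

theorem smul_nonneg (hT : IsBFSvia μ E T) {c : ℝ} (hc : 0 ≤ c) {x : E} (hx : 0 ≤ x) :
    0 ≤ c • x := hT.nonneg_iff_ae.2 <| by
  filter_upwards [map_smul T c x ▸ AEEqFun.coeFn_smul c (T x), hT.nonneg_iff_ae.1 hx]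
    with ω h h0
  rw [h, Pi.smul_apply, smul_eq_mul]
  exact mul_nonneg hc h0

theorem map_inf (hT : IsBFSvia μ E T) (a b : E) : T (a ⊓ b) = T a ⊓ T b := by
  have habs : ∀ y : E, ∀ᵐ ω ∂μ, |T y ω| ≤ T |y| ω := fun y => by
    filter_upwards [hT.le_iff_ae.1 (le_abs_self y), hT.le_iff_ae.1 (neg_le_abs y),
      map_neg T y ▸ AEEqFun.coeFn_neg (T y)] with ω h h' hneg
    rw [hneg, Pi.neg_apply] at h'
    exact abs_le'.2 ⟨h, h'⟩
  obtain ⟨e, he⟩ := hT.solid (T a ⊓ T b) (|a| + |b|) (by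
    rw [← AEEqFun.coeFn_le]
    filter_upwards [AEEqFun.coeFn_abs (T a ⊓ T b), AEEqFun.coeFn_abs (T (|a| + |b|)),
      AEEqFun.coeFn_inf (T a) (T b), map_add T |a| |b| ▸ AEEqFun.coeFn_add (T |a|) (T |b|),
      habs a, habs b] with ω h₁ h₂ h₃ h₄ ha hb
    rw [h₁, h₂, h₃, h₄, Pi.add_apply]
    refine abs_min_le_max_abs_abs.trans ((max_le ?_ ?_).trans (le_abs_self _)) <;>
      linarith [abs_nonneg (T a ω), abs_nonneg (T b ω)])
  have he_le : e ≤ a ⊓ b :=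
    le_inf ((hT.ord _ _).2 (he ▸ inf_le_left)) ((hT.ord _ _).2 (he ▸ inf_le_right))
  exact le_antisymm (le_inf ((hT.ord _ _).1 inf_le_left) ((hT.ord _ _).1 inf_le_right))
    (he ▸ (hT.ord _ _).1 he_le)

theorem exists_ae_eq_indicator (hT : IsBFSvia μ E T) (x : E) {A : Set Ω}
    (hA : MeasurableSet A) : ∃ e : E, ⇑(T e) =ᵐ[μ] A.indicator (T x) := by
  have hm := (T x).aestronglyMeasurable.indicator hA
  obtain ⟨e, he⟩ := hT.solid (AEEqFun.mk _ hm) x (by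
    rw [← AEEqFun.coeFn_le]
    filter_upwards [AEEqFun.coeFn_abs (AEEqFun.mk _ hm), AEEqFun.coeFn_abs (T x),
      AEEqFun.coeFn_mk _ hm] with ω h₁ h₂ h₃
    rw [h₁, h₂, h₃]
    by_cases hω : ω ∈ A <;> simp [hω])
  exact ⟨e, he ▸ AEEqFun.coeFn_mk _ hm⟩

open scoped Classical in
/-- The element of `E` represented by `1_A · T x` (junk value `0` for non-measurable `A`). -/
noncomputable def indicator (hT : IsBFSvia μ E T) (A : Set Ω) (x : E) : E :=
  if hA : MeasurableSet A then (hT.exists_ae_eq_indicator x hA).choose else 0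

theorem coeFn_indicator (hT : IsBFSvia μ E T) (x : E) {A : Set Ω} (hA : MeasurableSet A) :
    ⇑(T (hT.indicator A x)) =ᵐ[μ] A.indicator (T x) := by
  rw [indicator, dif_pos hA]
  exact (hT.exists_ae_eq_indicator x hA).choose_spec

theorem indicator_nonneg (hT : IsBFSvia μ E T) {x : E} (hx : 0 ≤ x) {A : Set Ω}
    (hA : MeasurableSet A) : 0 ≤ hT.indicator A x := by
  rw [hT.nonneg_iff_ae]
  filter_upwards [hT.coeFn_indicator x hA, hT.nonneg_iff_ae.1 hx] with ω h h0
  rw [h]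
  by_cases hω : ω ∈ A <;> simp [hω, h0]

theorem indicator_mono (hT : IsBFSvia μ E T) {x : E} (hx : 0 ≤ x) {A B : Set Ω}
    (hA : MeasurableSet A) (hB : MeasurableSet B) (hAB : A ⊆ B) :
    hT.indicator A x ≤ hT.indicator B x := by
  rw [hT.le_iff_ae]
  filter_upwards [hT.coeFn_indicator x hA, hT.coeFn_indicator x hB, hT.nonneg_iff_ae.1 hx]
    with ω hA' hB' h0
  rw [hA', hB']
  by_cases hω : ω ∈ A
  · simp [hω, hAB hω]
  · by_cases hω' : ω ∈ B <;> simp [hω, hω', h0]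

theorem indicator_eq_zero (hT : IsBFSvia μ E T) {x : E} {A : Set Ω} (hA : MeasurableSet A)
    (h : ∀ᵐ ω ∂μ, ω ∈ A → T x ω = 0) : hT.indicator A x = 0 := by
  rw [hT.eq_zero_iff_ae]
  filter_upwards [hT.coeFn_indicator x hA, h] with ω h₁ h₂
  rw [h₁]
  by_cases hω : ω ∈ A <;> simp [hω, h₂]

theorem indicator_union (hT : IsBFSvia μ E T) (x : E) {A B : Set Ω} (hA : MeasurableSet A)
    (hB : MeasurableSet B) (hAB : Disjoint A B) :
    hT.indicator (A ∪ B) x = hT.indicator A x + hT.indicator B x := by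
  refine hT.injective (AEEqFun.ext ?_)
  filter_upwards [hT.coeFn_indicator x (hA.union hB), hT.coeFn_indicator x hA,
    hT.coeFn_indicator x hB, map_add T _ _ ▸ AEEqFun.coeFn_add _ _] with ω h h₁ h₂ h₃
  rw [h, h₃, Pi.add_apply, h₁, h₂, Set.indicator_union_of_disjoint hAB]

theorem isGLB_range_of_ae_tendsto (hT : IsBFSvia μ E T) {z : ℕ → E} (hz0 : ∀ n, 0 ≤ z n)
    (hlim : ∀ᵐ ω ∂μ, Tendsto (fun n => T (z n) ω) atTop (𝓝 0)) :
    IsGLB (Set.range z) 0 := by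
  refine ⟨Set.forall_mem_range.2 hz0, fun w hw => ?_⟩
  have hwz : ∀ᵐ ω ∂μ, ∀ n, T w ω ≤ T (z n) ω :=
    ae_all_iff.2 fun n => hT.le_iff_ae.1 (hw (Set.mem_range_self n))
  rw [hT.le_iff_ae, map_zero]
  filter_upwards [hwz, hlim, AEEqFun.coeFn_zero (μ := μ) (β := ℝ)] with ω hω hω' h0
  rw [h0]
  exact ge_of_tendsto' hω' hω

theorem tendsto_of_ae_tendsto (hT : IsBFSvia μ E T) {φ : E → ℝ} (hφ : OrderContinuousFun φ)
    {z : ℕ → E} (hz : Antitone z) (hz0 : ∀ n, 0 ≤ z n)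
    (hlim : ∀ᵐ ω ∂μ, Tendsto (fun n => T (z n) ω) atTop (𝓝 0)) :
    Tendsto (fun n => φ (z n)) atTop (𝓝 0) :=
  hφ.tendsto_of_antitone hz hz0 (hT.isGLB_range_of_ae_tendsto hz0 hlim)

variable {u : E} {φ : E →ₗ[ℝ] ℝ}

theorem tendsto_map_indicator_iUnion (hT : IsBFSvia μ E T) (hu : 0 ≤ u)
    (hφ : OrderContinuousFun φ) {A : ℕ → Set Ω} (hA : ∀ n, MeasurableSet (A n))
    (hmono : Monotone A) :
    Tendsto (fun n => φ (hT.indicator (A n) u)) atTop (𝓝 (φ (hT.indicator (⋃ n, A n) u))) := by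
  have hU : MeasurableSet (⋃ n, A n) := MeasurableSet.iUnion hA
  set z : ℕ → E := fun n => hT.indicator (⋃ n, A n) u - hT.indicator (A n) u
  have hz : Antitone z := fun m n hmn =>
    sub_le_sub_left (hT.indicator_mono hu (hA m) (hA n) (hmono hmn)) _
  have hz0 : ∀ n, 0 ≤ z n := fun n =>
    sub_nonneg.2 (hT.indicator_mono hu (hA n) hU (Set.subset_iUnion A n))
  have hlim : ∀ᵐ ω ∂μ, Tendsto (fun n => T (z n) ω) atTop (𝓝 0) := by
    have hTz : ∀ᵐ ω ∂μ, ∀ n, T (z n) ω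
        = (⋃ n, A n).indicator (T u) ω - (A n).indicator (T u) ω := ae_all_iff.2 fun n => by
      filter_upwards [map_sub T _ _ ▸ AEEqFun.coeFn_sub (T (hT.indicator (⋃ n, A n) u))
          (T (hT.indicator (A n) u)), hT.coeFn_indicator u hU, hT.coeFn_indicator u (hA n)]
        with ω h h₁ h₂
      rw [h, Pi.sub_apply, h₁, h₂]
    filter_upwards [hTz] with ω hω
    simp_rw [hω]
    by_cases hω' : ω ∈ ⋃ n, A n
    · obtain ⟨N, hN⟩ := Set.mem_iUnion.1 hω'
      refine tendsto_atTop_of_eventually_const (i₀ := N) fun n hn => ?_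
      rw [Set.indicator_of_mem hω', Set.indicator_of_mem (hmono hn hN), sub_self]
    · have hn : ∀ n, ω ∉ A n := fun n h => hω' (Set.mem_iUnion.2 ⟨n, h⟩)
      simp [Set.indicator_of_notMem hω', Set.indicator_of_notMem (hn _)]
  have := (tendsto_const_nhds (x := φ (hT.indicator (⋃ n, A n) u))).sub
    (hT.tendsto_of_ae_tendsto hφ hz hz0 hlim)
  simpa [z] using this

theorem ae_eq_zero_of_unit_eq_zero (hT : IsBFSvia μ E T) (hu : 0 ≤ u)
    (hweak : ∀ x : E, 0 ≤ x → x ⊓ u = 0 → x = 0) {x : E} (hx : 0 ≤ x) :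
    ∀ᵐ ω ∂μ, T u ω = 0 → T x ω = 0 := by
  have hB : MeasurableSet {ω | T u ω = 0} := (T u).measurable (measurableSet_singleton 0)
  have he : hT.indicator {ω | T u ω = 0} x = 0 := by
    refine hweak _ (hT.indicator_nonneg hx hB) (hT.eq_zero_iff_ae.2 ?_)
    filter_upwards [hT.map_inf _ u ▸ AEEqFun.coeFn_inf _ (T u), hT.coeFn_indicator x hB,
      hT.nonneg_iff_ae.1 hx, hT.nonneg_iff_ae.1 hu] with ω h h₁ hx0 hu0
    rw [h, h₁]
    by_cases hω : T u ω = 0 <;> simp [hω, hx0, hu0]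
  filter_upwards [hT.coeFn_indicator x hB, hT.eq_zero_iff_ae.1 he] with ω h₁ h₂ hω
  simpa [hω] using h₁.symm.trans h₂

theorem tendsto_map_inf_smul (hT : IsBFSvia μ E T) (hu : 0 ≤ u)
    (hweak : ∀ x : E, 0 ≤ x → x ⊓ u = 0 → x = 0) (hφc : OrderContinuousFun φ) {x : E}
    (hx : 0 ≤ x) : Tendsto (fun k : ℕ => φ (x ⊓ (k : ℝ) • u)) atTop (𝓝 (φ x)) := by
  set z : ℕ → E := fun k => x - x ⊓ (k : ℝ) • u
  have hTz : ∀ᵐ ω ∂μ, ∀ k : ℕ, T (z k) ω = T x ω - min (T x ω) (k * T u ω) :=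
    ae_all_iff.2 fun k => by
      filter_upwards [map_sub T _ _ ▸ AEEqFun.coeFn_sub (T x) (T (x ⊓ (k : ℝ) • u)),
        hT.map_inf x _ ▸ AEEqFun.coeFn_inf (T x) (T ((k : ℝ) • u)),
        map_smul T (k : ℝ) u ▸ AEEqFun.coeFn_smul (k : ℝ) (T u)] with ω h₁ h₂ h₃
      rw [h₁, Pi.sub_apply, h₂, h₃, Pi.smul_apply, smul_eq_mul]
  have hz : Antitone z := fun k l hkl => hT.le_iff_ae.2 <| by
    filter_upwards [hTz, hT.nonneg_iff_ae.1 hu] with ω h hu0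
    rw [h, h]
    gcongr
  have hz0 : ∀ k, 0 ≤ z k := fun k => sub_nonneg.2 inf_le_left
  have hlim : ∀ᵐ ω ∂μ, Tendsto (fun k => T (z k) ω) atTop (𝓝 0) := by
    filter_upwards [hTz, hT.nonneg_iff_ae.1 hu, hT.ae_eq_zero_of_unit_eq_zero hu hweak hx]
      with ω h hu0 hvan
    obtain ⟨N, hN⟩ : ∃ N : ℕ, T x ω ≤ N * T u ω := by
      rcases hu0.eq_or_lt with h0 | hpos
      · exact ⟨0, by simp [hvan h0.symm]⟩
      · obtain ⟨N, hN⟩ := exists_nat_ge (T x ω / T u ω)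
        exact ⟨N, (div_le_iff₀ hpos).1 hN⟩
    refine tendsto_atTop_of_eventually_const (i₀ := N) fun k hk => ?_
    rw [h, min_eq_left (hN.trans (by gcongr)), sub_self]
  have := (tendsto_const_nhds (x := φ x)).sub (hT.tendsto_of_ae_tendsto hφc hz hz0 hlim)
  simpa [z] using this

theorem indicator_accumulate (hT : IsBFSvia μ E T) (x : E) {f : ℕ → Set Ω}
    (hf : ∀ i, MeasurableSet (f i)) (hd : Pairwise (Function.onFun Disjoint f)) (n : ℕ) :
    hT.indicator (Set.accumulate f n) x = ∑ i ∈ Finset.range (n + 1), hT.indicator (f i) x := by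
  induction n with
  | zero => simp
  | succ n ih =>
    rw [Set.accumulate_succ, hT.indicator_union x (MeasurableSet.accumulate hf n) (hf _)
      (Set.disjoint_accumulate hd n.lt_succ_self), ih, Finset.sum_range_succ _ (n + 1)]

theorem hasSum_map_indicator (hT : IsBFSvia μ E T) (hu : 0 ≤ u)
    (hφ : ∀ x, 0 ≤ x → 0 ≤ φ x) (hφc : OrderContinuousFun φ) {f : ℕ → Set Ω}
    (hf : ∀ i, MeasurableSet (f i)) (hd : Pairwise (Function.onFun Disjoint f)) :
    HasSum (fun i => φ (hT.indicator (f i) u)) (φ (hT.indicator (⋃ i, f i) u)) := by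
  rw [hasSum_iff_tendsto_nat_of_nonneg (fun i => hφ _ (hT.indicator_nonneg hu (hf i))),
    ← tendsto_add_atTop_iff_nat 1]
  simp only [← map_sum, ← hT.indicator_accumulate u hf hd]
  rw [← Set.iUnion_accumulate]
  exact hT.tendsto_map_indicator_iUnion hu hφc (MeasurableSet.accumulate hf)
    Set.monotone_accumulate

/-- The measure `A ↦ φ (1_A · u)`; order continuity of `φ` makes it countably additive. -/
noncomputable def functionalMeasure (hT : IsBFSvia μ E T) (hu : 0 ≤ u)
    (hφ : ∀ x, 0 ≤ x → 0 ≤ φ x) (hφc : OrderContinuousFun φ) : Measure Ω :=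
  Measure.ofMeasurable (fun A _ => ENNReal.ofReal (φ (hT.indicator A u)))
    (by rw [hT.indicator_eq_zero MeasurableSet.empty (by simp), map_zero, ENNReal.ofReal_zero])
    fun f hf hd => by
      have hsum := hT.hasSum_map_indicator hu hφ hφc hf hd
      rw [← hsum.tsum_eq, ENNReal.ofReal_tsum_of_nonneg
        (fun i => hφ _ (hT.indicator_nonneg hu (hf i))) hsum.summable]

variable {hT : IsBFSvia μ E T} {hu : 0 ≤ u} {hφ : ∀ x, 0 ≤ x → 0 ≤ φ x}
  {hφc : OrderContinuousFun φ}

theorem functionalMeasure_apply {A : Set Ω} (hA : MeasurableSet A) :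
    hT.functionalMeasure hu hφ hφc A = ENNReal.ofReal (φ (hT.indicator A u)) :=
  Measure.ofMeasurable_apply A hA

theorem functionalMeasure_eq_zero_iff {A : Set Ω} (hA : MeasurableSet A) :
    hT.functionalMeasure hu hφ hφc A = 0 ↔ φ (hT.indicator A u) = 0 := by
  rw [functionalMeasure_apply hA, ENNReal.ofReal_eq_zero]
  exact ⟨fun h => h.antisymm (hφ _ (hT.indicator_nonneg hu hA)), le_of_eq⟩

instance : IsFiniteMeasure (hT.functionalMeasure hu hφ hφc) :=
  ⟨by rw [functionalMeasure_apply MeasurableSet.univ]; exact ENNReal.ofReal_lt_top⟩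

theorem functionalMeasure_absolutelyContinuous : hT.functionalMeasure hu hφ hφc ≪ μ :=
  Measure.AbsolutelyContinuous.mk fun A hA hμA => by
    rw [functionalMeasure_apply hA, hT.indicator_eq_zero hA
      ((measure_eq_zero_iff_ae_notMem.1 hμA).mono fun _ h h' => absurd h' h),
      map_zero, ENNReal.ofReal_zero]

theorem functionalMeasure_pos_eq_zero_of_map_eq_zero {x : E} (hx : 0 ≤ x) (h : φ x = 0) :
    hT.functionalMeasure hu hφ hφc {ω | 0 < T x ω} = 0 := by
  have hA : ∀ n : ℕ, MeasurableSet {ω | T u ω ≤ n * T x ω} := fun n =>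
    measurableSet_le (T u).measurable (measurable_const.mul (T x).measurable)
  have hA0 : ∀ n : ℕ, hT.functionalMeasure hu hφ hφc {ω | T u ω ≤ n * T x ω} = 0 := by
    intro n
    have hle : hT.indicator {ω | T u ω ≤ n * T x ω} u ≤ (n : ℝ) • x := hT.le_iff_ae.2 <| by
      filter_upwards [hT.coeFn_indicator u (hA n),
        map_smul T (n : ℝ) x ▸ AEEqFun.coeFn_smul (n : ℝ) (T x), hT.nonneg_iff_ae.1 hx]
        with ω h₁ h₂ hx0
      rw [h₁, h₂, Pi.smul_apply, smul_eq_mul]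
      by_cases hω : T u ω ≤ n * T x ω
      · simp [hω]
      · simp only [Set.mem_ofPred_eq, hω, not_false_eq_true, Set.indicator_of_notMem]
        positivity
    rw [functionalMeasure_eq_zero_iff (hA n)]
    refine le_antisymm ?_ (hφ _ (hT.indicator_nonneg hu (hA n)))
    simpa [h] using φ.monotone_of_nonneg hφ hle
  refine measure_mono_null (fun ω hω => ?_) (measure_iUnion_null hA0)
  obtain ⟨n, hn⟩ := exists_nat_ge (T u ω / T x ω)
  exact Set.mem_iUnion.2 ⟨n, (div_le_iff₀ hω).1 hn⟩

theorem map_eq_zero_of_functionalMeasure_pos_eq_zero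
    (hweak : ∀ x : E, 0 ≤ x → x ⊓ u = 0 → x = 0) {x : E} (hx : 0 ≤ x)
    (h : hT.functionalMeasure hu hφ hφc {ω | 0 < T x ω} = 0) : φ x = 0 := by
  have hA : MeasurableSet {ω | 0 < T x ω} := measurableSet_lt measurable_const (T x).measurable
  have hφA := (functionalMeasure_eq_zero_iff hA).1 h
  have htrunc : ∀ k : ℕ, φ (x ⊓ (k : ℝ) • u) = 0 := fun k => by
    have hle : x ⊓ (k : ℝ) • u ≤ (k : ℝ) • hT.indicator {ω | 0 < T x ω} u :=
      hT.le_iff_ae.2 <| by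
        filter_upwards [hT.map_inf x _ ▸ AEEqFun.coeFn_inf (T x) (T ((k : ℝ) • u)),
          map_smul T (k : ℝ) u ▸ AEEqFun.coeFn_smul (k : ℝ) (T u),
          map_smul T (k : ℝ) _ ▸ AEEqFun.coeFn_smul (k : ℝ) (T (hT.indicator _ u)),
          hT.coeFn_indicator u hA] with ω h₁ h₂ h₃ h₄
        rw [h₁, h₂, h₃, Pi.smul_apply, Pi.smul_apply, h₄, smul_eq_mul, smul_eq_mul]
        by_cases hω : 0 < T x ω
        · simp [hω]
        · simp only [Set.mem_ofPred_eq, hω, not_false_eq_true, Set.indicator_of_notMem, mul_zero]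
          exact (min_le_left _ _).trans (not_lt.1 hω)
    refine le_antisymm ?_ (hφ _ (le_inf hx (hT.smul_nonneg k.cast_nonneg hu)))
    simpa [hφA] using φ.monotone_of_nonneg hφ hle
  exact tendsto_nhds_unique (hT.tendsto_map_inf_smul hu hweak hφc hx) (by simp [htrunc])

end IsBFSvia

/-- In a Banach function space `E` (with a weak unit `u > 0`), any family of
positive order continuous functionals `{x*_γ}` admits a countable subfamily `{x*_{γₙ}}`
such that for `x ≥ 0`: if all `x*_{γₙ}(x) = 0` then `x*_γ(x) = 0` for every `γ`. -/
theorem exists_countable_subfamily_null_determining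
    {m0 : MeasurableSpace Ω} {μ : Measure Ω} [IsProbabilityMeasure μ]
    (E : Type v) [NormedAddCommGroup E] [Lattice E] [HasSolidNorm E] [IsOrderedAddMonoid E] [NormedSpace ℝ E] [CompleteSpace E]
    (T : E →ₗ[ℝ] (Ω →ₘ[μ] ℝ)) (hT : IsBFSvia μ E T)
    (u : E) (hu : 0 < u) (hweak : ∀ x : E, 0 ≤ x → x ⊓ u = 0 → x = 0)
    {Γ : Type v} [Nonempty Γ] (xstar : Γ → (E →ₗ[ℝ] ℝ))
    (hpos : ∀ γ, ∀ x : E, 0 ≤ x → 0 ≤ xstar γ x)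
    (hoc : ∀ γ, OrderContinuousFun ⇑(xstar γ)) :
    ∃ γn : ℕ → Γ, ∀ x : E, 0 ≤ x →
      (∀ n, xstar (γn n) x = 0) → ∀ γ, xstar γ x = 0 := by
  obtain ⟨t, ht⟩ := Measure.exists_seq_absolutelyContinuous_sum μ
    (fun γ => hT.functionalMeasure hu.le (hpos γ) (hoc γ))
    fun γ => IsBFSvia.functionalMeasure_absolutelyContinuous
  refine ⟨t, fun x hx hzero γ => ?_⟩
  refine IsBFSvia.map_eq_zero_of_functionalMeasure_pos_eq_zero hweak hx (ht γ ?_)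
  exact Measure.sum_apply_eq_zero.2 fun n =>
    IsBFSvia.functionalMeasure_pos_eq_zero_of_map_eq_zero hx (hzero n)
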